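/- arXiv:1212.1707 — 4 statements merged into one kernel-verified Lean document; each statement's English description precedes it below -/
import Mathlib

section
/- Let R > 0, L a positive integer with 2R/L < 1, and suppose real sequences (Δ_i)_{i=0}^L, (γ_i)_{i=1}^L, (ε_i)_{i=1}^L with Δ_i ≥ −1 satisfy the recursion (1+Δ_i)² = (1+Δ_{i−1})² + (2R/L)/(1 − 2R/L)·(Δ_{i−1}² + γ_i − 2ε_i(1+Δ_{i−1})) for i = 1, ..., L, where 1+Δ_i ≥ 0. Assume |Δ_0| < δ_0, (1/L)Σ|γ_i| < δ_1, (1/L)Σ|ε_i| < δ_2, and δ_0 + 5R(δ_1+δ_2) < 1/2. Then for all sufficiently large L, for each i = 1, ..., L: Δ_i ≥ Δ_0 − (4R/(1−2R/L))·Σ_{j=1}^i (|γ_j|+|ε_j|)/L, and in particular Δ_i > −1/2. -/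
set_option maxHeartbeats 1000000

lemma sparc_aux (c x a gam eps : ℝ)
    (hc : 0 ≤ c) (hu0 : 0 ≤ 1 + x) (ha : a ≤ 1 + x) (ha2 : 1/2 ≤ a)
    (ht' : 1/2 ≤ a - 2*c*(|gam| + |eps|)) (hce : 2*c*|eps| ≤ 1) :
    (a - 2*c*(|gam| + |eps|))^2 ≤ (1+x)^2 + c*(x^2 + gam - 2*eps*(1+x)) := by
  have hg : 0 ≤ |gam| := abs_nonneg _
  have he : 0 ≤ |eps| := abs_nonneg _
  have hA : 0 ≤ c * (gam + |gam|) := mul_nonneg hc (by linarith [neg_abs_le gam])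
  have hB : 0 ≤ c * (|eps| - eps) * (1 + x) :=
    mul_nonneg (mul_nonneg hc (by linarith [le_abs_self eps])) hu0
  nlinarith [mul_nonneg hc (sq_nonneg x),
    mul_nonneg (mul_nonneg hc hg) (by linarith : (0:ℝ) ≤ 2*a - 1),
    mul_nonneg (by linarith : (0:ℝ) ≤ 1 + x - a) (by linarith : (0:ℝ) ≤ 1 + x + a - 2*c*|eps|),
    mul_nonneg (mul_nonneg hc (by linarith : (0:ℝ) ≤ |gam| + |eps|))
      (by linarith : (0:ℝ) ≤ a - 2*c*(|gam| + |eps|)),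
    hA, hB]

theorem sparc_deviation_lower_bound
    (R δ₀ δ₁ δ₂ : ℝ) (hR : 0 < R)
    (hδ : δ₀ + 5 * R * (δ₁ + δ₂) < 1 / 2) :
    ∃ L₀ : ℕ, ∀ L : ℕ, L₀ ≤ L → 0 < L → 2 * R / L < 1 →
      ∀ (Δ γ ε : ℕ → ℝ),
        (∀ i, i ≤ L → -1 ≤ Δ i) →
        (∀ i, i ≤ L → 0 ≤ 1 + Δ i) →
        (∀ i, 1 ≤ i → i ≤ L →
          (1 + Δ i) ^ 2 = (1 + Δ (i - 1)) ^ 2 +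
            (2 * R / L) / (1 - 2 * R / L) *
              ((Δ (i - 1)) ^ 2 + γ i - 2 * ε i * (1 + Δ (i - 1)))) →
        |Δ 0| < δ₀ →
        (1 / L : ℝ) * ∑ i ∈ Finset.Icc 1 L, |γ i| < δ₁ →
        (1 / L : ℝ) * ∑ i ∈ Finset.Icc 1 L, |ε i| < δ₂ →
        ∀ i, 1 ≤ i → i ≤ L →
          (Δ i ≥ Δ 0 - (4 * R / (1 - 2 * R / L)) *
              ∑ j ∈ Finset.Icc 1 i, (|γ j| + |ε j|) / L) ∧
          Δ i > -(1 / 2) := by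
  refine ⟨⌈10 * R⌉₊, ?_⟩
  intro L hL hLpos hRL Δ γ ε hΔ1 hΔ0 hrec h0 hγ hε
  have hL0 : (0:ℝ) < L := by exact_mod_cast hLpos
  have h10 : 10 * R ≤ (L:ℝ) := Nat.ceil_le.mp hL
  set d : ℝ := 2 * R / (L:ℝ) with hd_def
  have hdpos : 0 < d := by positivity
  have hd5 : d ≤ 1/5 := by rw [hd_def, div_le_iff₀ hL0]; linarith
  have h1d : (4:ℝ)/5 ≤ 1 - d := by linarith
  have h1dpos : (0:ℝ) < 1 - d := by linarith
  set c : ℝ := d / (1 - d) with hc_def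
  clear_value d c
  have hc0 : 0 < c := hc_def ▸ div_pos hdpos h1dpos
  have hdL : d * L = 2 * R := by rw [hd_def]; field_simp
  have hcL : c * L = 2 * R / (1 - d) := by
    rw [hc_def, div_mul_eq_mul_div, hdL]
  set S : ℕ → ℝ := fun i => ∑ j ∈ Finset.Icc 1 i, (|γ j| + |ε j|) with hS_def
  clear_value S
  have hδ0pos : 0 < δ₀ := lt_of_le_of_lt (abs_nonneg _) h0
  have hsγ : 0 ≤ ∑ j ∈ Finset.Icc 1 L, |γ j| := Finset.sum_nonneg fun j _ => abs_nonneg _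
  have hsε : 0 ≤ ∑ j ∈ Finset.Icc 1 L, |ε j| := Finset.sum_nonneg fun j _ => abs_nonneg _
  rw [one_div_mul_eq_div] at hγ hε
  have hδ1 : 0 < δ₁ := lt_of_le_of_lt (div_nonneg hsγ hL0.le) hγ
  have hδ2 : 0 < δ₂ := lt_of_le_of_lt (div_nonneg hsε hL0.le) hε
  have hγL : ∑ j ∈ Finset.Icc 1 L, |γ j| < δ₁ * L := (div_lt_iff₀ hL0).mp hγ
  have hεL : ∑ j ∈ Finset.Icc 1 L, |ε j| < δ₂ * L := (div_lt_iff₀ hL0).mp hε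
  have hSnn : ∀ i, 0 ≤ S i := by
    intro i; simp only [hS_def]
    exact Finset.sum_nonneg fun j _ => by positivity
  have hSle : ∀ i, i ≤ L → S i ≤ S L := by
    intro i hi; simp only [hS_def]
    exact Finset.sum_le_sum_of_subset_of_nonneg (Finset.Icc_subset_Icc_right hi)
      (fun j _ _ => by positivity)
  have hSL : S L < (δ₁ + δ₂) * L := by
    have hs : S L = (∑ j ∈ Finset.Icc 1 L, |γ j|) + ∑ j ∈ Finset.Icc 1 L, |ε j| := by
      simp only [hS_def]; exact Finset.sum_add_distrib
    rw [hs]; nlinarith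
  have hcS : ∀ i, i ≤ L → 2 * c * S i < 1/2 - δ₀ := by
    intro i hi
    have h1 : 2*c*S i ≤ 2*c*S L :=
      mul_le_mul_of_nonneg_left (hSle i hi) (by positivity)
    have h2 : 2*c*S L < 2*c*((δ₁+δ₂)*L) :=
      mul_lt_mul_of_pos_left hSL (by positivity)
    have h4 : 4*R*(δ₁+δ₂) ≤ 5*R*(δ₁+δ₂)*(1-d) := by
      nlinarith [mul_nonneg hR.le (by positivity : (0:ℝ) ≤ δ₁+δ₂)]
    have h3 : 2*c*((δ₁+δ₂)*L) ≤ 5*R*(δ₁+δ₂) := by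
      calc 2*c*((δ₁+δ₂)*L) = 2*(δ₁+δ₂)*(c*L) := by ring
        _ = (4*R*(δ₁+δ₂))/(1-d) := by rw [hcL]; ring
        _ ≤ 5*R*(δ₁+δ₂) := (div_le_iff₀ h1dpos).mpr h4
    linarith
  have hΔ0' := abs_lt.mp h0
  -- main induction
  have main : ∀ i, i ≤ L → 1 + Δ 0 - 2*c*S i ≤ 1 + Δ i := by
    intro i
    induction i with
    | zero =>
      intro _
      have hS0 : S 0 = 0 := by simp [hS_def]
      rw [hS0]; ring_nf; simp
    | succ i ih =>
      intro hsucc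
      have hiL : i ≤ L := Nat.le_of_succ_le hsucc
      have ihi := ih hiL
      have hreci := hrec (i+1) (by omega) hsucc
      simp only [Nat.add_sub_cancel] at hreci
      have hSi : S (i+1) = S i + (|γ (i+1)| + |ε (i+1)|) := by
        simp only [hS_def]
        exact Finset.sum_Icc_succ_top (by omega) _
      have hti : 1/2 < 1 + Δ 0 - 2*c*S i := by have := hcS i hiL; linarith
      have hti1 : 1/2 < 1 + Δ 0 - 2*c*S (i+1) := by have := hcS (i+1) hsucc; linarith
      rw [hSi] at hti1
      have hmem : (i+1) ∈ Finset.Icc 1 L := Finset.mem_Icc.mpr ⟨by omega, hsucc⟩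
      have hεi : |ε (i+1)| ≤ ∑ j ∈ Finset.Icc 1 L, |ε j| :=
        Finset.single_le_sum (fun j _ => abs_nonneg (ε j)) hmem
      have hce : 2 * c * |ε (i+1)| ≤ 1 := by
        have h5 : c * |ε (i+1)| ≤ c * (δ₂ * L) :=
          mul_le_mul_of_nonneg_left (le_of_lt (lt_of_le_of_lt hεi hεL)) hc0.le
        have h7 : c * (δ₂ * L) ≤ δ₂ * ((5/2)*R) := by
          calc c * (δ₂ * L) = δ₂ * (c * L) := by ring
            _ = δ₂ * (2*R/(1-d)) := by rw [hcL]
            _ ≤ δ₂ * ((5/2)*R) := by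
                apply mul_le_mul_of_nonneg_left _ hδ2.le
                rw [div_le_iff₀ h1dpos]
                nlinarith
        have h8 : δ₂ * ((5/2)*R) < 1/4 := by
          nlinarith [mul_pos hR hδ1]
        linarith
      have ht' : 1/2 ≤ (1 + Δ 0 - 2*c*S i) - 2*c*(|γ (i+1)| + |ε (i+1)|) := by linarith
      have hsq := sparc_aux c (Δ i) (1 + Δ 0 - 2*c*S i) (γ (i+1)) (ε (i+1))
        hc0.le (hΔ0 i hiL) ihi hti.le ht' hce
      rw [← hreci] at hsq
      have hb := hΔ0 (i+1) hsucc
      rw [hSi]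
      nlinarith [hsq, hb, hti1]
  intro i hi1 hiL
  have h1 : Δ 0 - 2*c*S i ≤ Δ i := by have := main i hiL; linarith
  have hLne : (L:ℝ) ≠ 0 := hL0.ne'
  have hne : (1:ℝ) - 2*R/(L:ℝ) ≠ 0 := by rw [← hd_def]; exact h1dpos.ne'
  have h2 : 4 * R / (1 - d) * ∑ j ∈ Finset.Icc 1 i, (|γ j| + |ε j|) / (L:ℝ) = 2*c*S i := by
    rw [← Finset.sum_div]
    simp only [hS_def]
    rw [hc_def, show (4:ℝ) * R / (1 - d) = 2 * (d * (L:ℝ)) / (1 - d) from by rw [hdL]; ring]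
    field_simp
  constructor
  · rw [ge_iff_le, h2]; linarith
  · have := hcS i hiL; linarith
end

section
/- Under the hypotheses of the recursion lemma (recursion (1+Δ_i)² = (1+Δ_{i−1})² + (2R/L)/(1−2R/L)·(Δ_{i−1}² + γ_i − 2ε_i(1+Δ_{i−1})), with |Δ_0| < δ_0, averages of |γ_i| and |ε_i| bounded by δ_1 and δ_2, δ_0 + 5R(δ_1+δ_2) < 1/2, and L sufficiently large so that Δ_i > −1/2 for all i), one has for i = 1, ..., L: |Δ_i| ≤ |Δ_0| w^i + (4R/L)/(1 − 2R/L)·Σ_{j=1}^i w^{i−j}(|γ_j| + |ε_j|), where w = 1 + (R/L)/(1 − 2R/L). -/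
set_option maxHeartbeats 1000000 in
lemma sparc_core (c a b A g e gam eps : ℝ) (hc : 0 < c) (ha : -(1/2) < a) (hb : -(1/2) < b)
    (hA : A = a ∨ A = -a) (hA0 : 0 ≤ A)
    (hg1 : gam ≤ g) (hg2 : -g ≤ gam) (hg0 : 0 ≤ g)
    (he1 : eps ≤ e) (he2 : -e ≤ eps) (he0 : 0 ≤ e)
    (heq : (1+b)^2 = (1+a)^2 + c*(a^2 + gam - 2*eps*(1+a))) :
    |b| ≤ (1 + c/2) * A + 2*c*(g + e) := by
  have hA1 : a ≤ A := by rcases hA with h | h <;> [linarith; nlinarith]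
  have hA2 : -A ≤ a := by rcases hA with h | h <;> [nlinarith; linarith]
  have hM0 : 0 ≤ (1 + c/2) * A + 2*c*(g + e) := by positivity
  rw [abs_le]
  constructor
  · rcases le_or_gt 0 b with h | h
    · linarith
    by_contra hcon
    push_neg at hcon
    have hbM : b < -((1 + c/2) * A + 2*c*(g + e)) := by linarith
    have hMh : (1 + c/2) * A + 2*c*(g + e) < 1/2 := by linarith
    have hsq : (1+b)^2 < (1 - ((1 + c/2) * A + 2*c*(g + e)))^2 := by
      nlinarith [mul_pos (show (0:ℝ) < (1 - ((1 + c/2) * A + 2*c*(g + e))) - (1+b) by linarith)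
        (show (0:ℝ) < (1 - ((1 + c/2) * A + 2*c*(g + e))) + (1+b) by linarith)]
    have e1 : (1+a)^2 + c*a^2 - c*g - 2*c*e*(1+a) ≤ (1+b)^2 := by
      nlinarith [mul_nonneg hc.le (show (0:ℝ) ≤ gam + g by linarith),
        mul_nonneg (mul_nonneg hc.le (show (0:ℝ) ≤ e - eps by linarith))
          (show (0:ℝ) ≤ 1 + a by linarith)]
    have e2 : (1 - ((1 + c/2) * A + 2*c*(g + e)))^2
        ≤ (1+a)^2 + c*a^2 - c*g - 2*c*e*(1+a) := by
      rcases hA with hA | hA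
      · -- A = a ≥ 0
        subst hA
        have hce : c*e < 1/4 := by nlinarith
        have hs : c/2*A + 2*c*g + 2*c*e < 1/2 := by nlinarith
        nlinarith [mul_nonneg hA0 (show (0:ℝ) ≤ 1/2 - (c/2*A + 2*c*g + 2*c*e) by linarith),
          mul_nonneg (show (0:ℝ) ≤ c/2*A + 2*c*g + 2*c*e by positivity)
            (show (0:ℝ) ≤ 1/2 - (c/2*A + 2*c*g + 2*c*e) by linarith),
          mul_nonneg (show (0:ℝ) ≤ 1/4 - c*e by linarith) hA0,
          mul_nonneg hc.le (sq_nonneg A), mul_nonneg hc.le hg0, mul_nonneg hc.le he0,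
          mul_nonneg (mul_nonneg hc.le hg0) hA0, mul_nonneg (mul_nonneg hc.le he0) hA0]
      · -- A = -a, a ≤ 0
        subst hA
        have ht : (1:ℝ)/2 < 1 + a := by linarith
        have hs : c/2*(-a) + 2*c*g + 2*c*e < 1/2 := by nlinarith
        nlinarith [mul_nonneg (mul_nonneg (by linarith : (0:ℝ) ≤ c/2) hA0)
            (show (0:ℝ) ≤ 2*(1+a) - (c/2*(-a) + 2*c*g + 2*c*e) by linarith),
          mul_nonneg (mul_nonneg hc.le hg0)
            (show (0:ℝ) ≤ 4*(1+a) - 2*(c/2*(-a) + 2*c*g + 2*c*e) - 1 by linarith),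
          mul_nonneg (mul_nonneg hc.le he0)
            (show (0:ℝ) ≤ (1+a) - (c/2*(-a) + 2*c*g + 2*c*e) by linarith),
          mul_nonneg hc.le (sq_nonneg a)]
    linarith
  · have u1 : (1+b)^2 ≤ (1+A)^2 + c*A^2 + c*g + 2*c*e * (1+A) := by
      have haA : a^2 ≤ A^2 := by rcases hA with h | h <;> nlinarith
      nlinarith [mul_nonneg (show (0:ℝ) ≤ A - a by linarith) (show (0:ℝ) ≤ 2 + A + a by linarith),
        mul_nonneg hc.le (show (0:ℝ) ≤ g - gam by linarith),
        mul_nonneg (mul_nonneg hc.le (show (0:ℝ) ≤ e + eps by linarith))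
          (show (0:ℝ) ≤ 1 + a by linarith),
        mul_nonneg (mul_nonneg hc.le he0) (show (0:ℝ) ≤ A - a by linarith),
        mul_nonneg hc.le (show (0:ℝ) ≤ A^2 - a^2 by linarith)]
    have u2 : (1+A)^2 + c*A^2 + c*g + 2*c*e * (1+A)
        ≤ (1 + ((1 + c/2) * A + 2*c*(g + e)))^2 := by
      nlinarith [mul_nonneg hc.le hA0, mul_nonneg hc.le hg0,
        mul_nonneg (mul_nonneg hc.le hg0) hA0,
        mul_nonneg (mul_nonneg hc.le he0) (show (0:ℝ) ≤ 1 + A by linarith),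
        sq_nonneg (c/2*A + 2*c*g + 2*c*e)]
    nlinarith [u1, u2]

lemma sparc_step (c a b γ ε : ℝ) (hc : 0 < c) (ha : a > -(1/2)) (hb : b > -(1/2))
    (heq : (1+b)^2 = (1+a)^2 + c*(a^2 + γ - 2*ε*(1+a))) :
    |b| ≤ (1 + c/2) * |a| + 2*c*(|γ| + |ε|) :=
  sparc_core c a b |a| |γ| |ε| γ ε hc ha hb
    ((abs_choice a).imp id (fun h => h)) (abs_nonneg a)
    (le_abs_self γ) (neg_abs_le γ) (abs_nonneg γ)
    (le_abs_self ε) (neg_abs_le ε) (abs_nonneg ε) heq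


theorem sparc_deviation_upper_bound
    (R δ₀ δ₁ δ₂ : ℝ) (hR : 0 < R)
    (hδ : δ₀ + 5 * R * (δ₁ + δ₂) < 1 / 2)
    (L : ℕ) (hL : 0 < L) (hRL : 2 * R / L < 1)
    (Δ γ ε : ℕ → ℝ)
    -- L large enough that Δ_i > −1/2 for all i
    (hΔhalf : ∀ i, i ≤ L → Δ i > -(1 / 2))
    (hrec : ∀ i, 1 ≤ i → i ≤ L →
      (1 + Δ i) ^ 2 = (1 + Δ (i - 1)) ^ 2 +
        (2 * R / L) / (1 - 2 * R / L) *
          ((Δ (i - 1)) ^ 2 + γ i - 2 * ε i * (1 + Δ (i - 1))))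
    (hΔ0 : |Δ 0| < δ₀)
    (hγ : (1 / L : ℝ) * ∑ i ∈ Finset.Icc 1 L, |γ i| < δ₁)
    (hε : (1 / L : ℝ) * ∑ i ∈ Finset.Icc 1 L, |ε i| < δ₂) :
    ∀ i, 1 ≤ i → i ≤ L →
      |Δ i| ≤ |Δ 0| * (1 + (R / L) / (1 - 2 * R / L)) ^ i +
        (4 * R / L) / (1 - 2 * R / L) *
          ∑ j ∈ Finset.Icc 1 i,
            (1 + (R / L) / (1 - 2 * R / L)) ^ (i - j) * (|γ j| + |ε j|) := by
  have hL0 : (0:ℝ) < L := by exact_mod_cast hL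
  have hden : (0:ℝ) < 1 - 2 * R / L := by linarith
  set c : ℝ := (2 * R / L) / (1 - 2 * R / L) with hcdef
  have hc : 0 < c := by positivity
  set w : ℝ := 1 + (R / L) / (1 - 2 * R / L) with hwdef
  have hwc : w = 1 + c/2 := by
    rw [hwdef, hcdef]; ring
  have hw1 : 1 ≤ w := by
    rw [hwc]; linarith
  have hK : (4 * R / L) / (1 - 2 * R / L) = 2 * c := by
    rw [hcdef]; ring
  have step : ∀ i, 1 ≤ i → i ≤ L →
      |Δ i| ≤ w * |Δ (i-1)| + 2*c*(|γ i| + |ε i|) := by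
    intro i h1 h2
    rw [hwc]
    exact sparc_core c (Δ (i-1)) (Δ i) |Δ (i-1)| |γ i| |ε i| (γ i) (ε i) hc
      (hΔhalf (i-1) (by omega)) (hΔhalf i h2)
      ((abs_choice _).imp id id) (abs_nonneg _)
      (le_abs_self _) (neg_abs_le _) (abs_nonneg _)
      (le_abs_self _) (neg_abs_le _) (abs_nonneg _) (hrec i h1 h2)
  intro i
  induction i with
  | zero => omega
  | succ n ih =>
    intro _ hnL
    rw [hK]
    rcases Nat.eq_zero_or_pos n with rfl | hn
    · -- base case i = 1
      have h := step 1 le_rfl hnL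
      simp only [Nat.sub_self] at h
      simp only [Nat.zero_add, Finset.Icc_self, Finset.sum_singleton, Nat.sub_self, pow_zero, one_mul, pow_one]
      linarith [h, mul_comm w |Δ 0|]
    · have hsum : ∑ j ∈ Finset.Icc 1 (n+1), w ^ (n+1-j) * (|γ j| + |ε j|)
          = w * ∑ j ∈ Finset.Icc 1 n, w ^ (n-j) * (|γ j| + |ε j|) + (|γ (n+1)| + |ε (n+1)|) := by
        rw [Finset.sum_Icc_succ_top (by omega), Finset.mul_sum]
        simp only [Nat.sub_self, pow_zero, one_mul]
        congr 1
        refine Finset.sum_congr rfl fun j hj => ?_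
        have hj' : j ≤ n := (Finset.mem_Icc.mp hj).2
        rw [show n+1-j = (n-j)+1 by omega, pow_succ]
        ring
      have ihn := ih hn (by omega)
      have hstep := step (n+1) (by omega) hnL
      simp only [Nat.add_sub_cancel] at hstep
      rw [hK] at ihn
      have habs : 0 ≤ |Δ (n+1-1)| := abs_nonneg _
      have hmul : w * |Δ n| ≤ w * (|Δ 0| * w ^ n + 2*c * ∑ j ∈ Finset.Icc 1 n, w ^ (n-j) * (|γ j| + |ε j|)) :=
        mul_le_mul_of_nonneg_left ihn (by linarith)
      rw [hsum]
      have h0 : 0 ≤ |Δ 0| := abs_nonneg _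
      calc |Δ (n+1)| ≤ w * |Δ n| + 2*c*(|γ (n+1)| + |ε (n+1)|) := hstep
        _ ≤ w * (|Δ 0| * w ^ n + 2*c * ∑ j ∈ Finset.Icc 1 n, w ^ (n-j) * (|γ j| + |ε j|))
            + 2*c*(|γ (n+1)| + |ε (n+1)|) := by linarith
        _ = |Δ 0| * w ^ (n+1) + 2*c * (w * ∑ j ∈ Finset.Icc 1 n, w ^ (n-j) * (|γ j| + |ε j|) + (|γ (n+1)| + |ε (n+1)|)) := by ring
end

section
/- Let R > 0, L a positive integer with R/L < 1/2, w = 1 + (R/L)/(1−2R/L), and δ_0, δ_1, δ_2 > 0. If |Δ_L| ≤ |Δ_0| w^L + (4R/L)/(1−2R/L)·Σ_{j=1}^L w^{L−j}(|γ_j|+|ε_j|), with |Δ_0| ≤ δ_0, (1/L)Σ|γ_j| ≤ δ_1, (1/L)Σ|ε_j| ≤ δ_2, then for all sufficiently large L: |Δ_L| ≤ e^R (δ_0 + 5R(δ_1 + δ_2)). -/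
theorem sparc_final_deviation_bound
    (R δ₀ δ₁ δ₂ : ℝ) (hR : 0 < R) (h0 : 0 < δ₀) (h1 : 0 < δ₁) (h2 : 0 < δ₂) :
    ∃ L₀ : ℕ, ∀ L : ℕ, L₀ ≤ L → 0 < L → R / L < 1 / 2 →
      ∀ (ΔL Δ0 : ℝ) (γ ε : ℕ → ℝ),
        |ΔL| ≤ |Δ0| * (1 + (R / L) / (1 - 2 * R / L)) ^ L +
          (4 * R / L) / (1 - 2 * R / L) *
            ∑ j ∈ Finset.Icc 1 L,
              (1 + (R / L) / (1 - 2 * R / L)) ^ (L - j) * (|γ j| + |ε j|) →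
        |Δ0| ≤ δ₀ →
        (1 / L : ℝ) * ∑ j ∈ Finset.Icc 1 L, |γ j| ≤ δ₁ →
        (1 / L : ℝ) * ∑ j ∈ Finset.Icc 1 L, |ε j| ≤ δ₂ →
        |ΔL| ≤ Real.exp R * (δ₀ + 5 * R * (δ₁ + δ₂)) := by
  set S := δ₁ + δ₂ with hSdef
  have hSpos : 0 < S := by positivity
  have hden : 0 < δ₀ + 4.5 * R * S := by positivity
  set c : ℝ := (δ₀ + 5 * R * S) / (δ₀ + 4.5 * R * S) with hcdef
  have hc1 : 1 < c := by
    rw [hcdef, lt_div_iff₀ hden]; nlinarith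
  have hlogc : 0 < Real.log c := Real.log_pos hc1
  refine ⟨max (⌈18 * R⌉₊ + 1) (⌈3 * R ^ 2 / Real.log c⌉₊ + 1), ?_⟩
  intro L hL hLpos hhalf ΔL Δ0 γ ε hmain hΔ0 hγ hε
  have hLR : (L : ℝ) > 0 := by exact_mod_cast hLpos
  have hLne : (L : ℝ) ≠ 0 := ne_of_gt hLR
  have hL1 : (18 * R : ℝ) ≤ L := by
    have h := le_trans (le_max_left _ _) hL
    have : (⌈18 * R⌉₊ : ℝ) ≤ L := by exact_mod_cast Nat.le_of_succ_le h
    exact le_trans (Nat.le_ceil _) this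
  have hL2 : 3 * R ^ 2 / Real.log c ≤ L := by
    have h := le_trans (le_max_right _ _) hL
    have : (⌈3 * R ^ 2 / Real.log c⌉₊ : ℝ) ≤ L := by exact_mod_cast Nat.le_of_succ_le h
    exact le_trans (Nat.le_ceil _) this
  clear hL
  set x : ℝ := R / L with hxdef
  have hxpos : 0 < x := by positivity
  have hx18 : x ≤ 1 / 18 := by
    rw [hxdef, div_le_div_iff₀ hLR (by norm_num)]
    linarith
  set D : ℝ := 1 - 2 * R / L with hDdef
  have hDx : D = 1 - 2 * x := by rw [hDdef, hxdef]; ring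
  have hD89 : (8 : ℝ) / 9 ≤ D := by rw [hDx]; linarith
  have hDpos : 0 < D := by linarith
  have hDne : D ≠ 0 := ne_of_gt hDpos
  set t : ℝ := x / D with htdef
  have htpos : 0 < t := by positivity
  set w : ℝ := 1 + x / D with hwdef
  have hw1 : 1 ≤ w := by rw [hwdef]; linarith [div_nonneg hxpos.le hDpos.le]
  -- w^L ≤ exp R * c
  clear_value S c x D t w
  have hLt : (L : ℝ) * t = R / D := by
    rw [htdef, hxdef]; field_simp
  have hRDbound : R / D ≤ R + 3 * R ^ 2 / L := by
    rw [div_le_iff₀ hDpos]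
    have key : (R + 3 * R ^ 2 / (L : ℝ)) * D - R
        = R ^ 2 / L - 6 * R ^ 3 / (L : ℝ) ^ 2 := by
      rw [hDx, hxdef]; field_simp; ring
    have h6 : 6 * R ^ 3 / (L : ℝ) ^ 2 ≤ R ^ 2 / L := by
      rw [div_le_div_iff₀ (by positivity) hLR]
      nlinarith [mul_le_mul_of_nonneg_left hL1 (mul_pos (mul_pos hR hR) hLR).le]
    linarith
  have hpow : w ^ L ≤ Real.exp R * c := by
    have hwe : w ≤ Real.exp t := by
      rw [hwdef, htdef]
      linarith [Real.add_one_le_exp (x / D)]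
    have step1 : w ^ L ≤ Real.exp t ^ L := pow_le_pow_left₀ (by positivity) hwe L
    have step2 : Real.exp t ^ L = Real.exp ((L : ℝ) * t) := by
      rw [← Real.exp_nat_mul]
    have step3 : Real.exp ((L : ℝ) * t) ≤ Real.exp (R + 3 * R ^ 2 / L) := by
      apply Real.exp_le_exp.2
      rw [hLt]; exact hRDbound
    have step4 : Real.exp (R + 3 * R ^ 2 / L) ≤ Real.exp R * c := by
      rw [Real.exp_add]
      apply mul_le_mul_of_nonneg_left _ (Real.exp_pos R).le
      have hlc : 3 * R ^ 2 / (L : ℝ) ≤ Real.log c := by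
        rw [div_le_iff₀ hLR, mul_comm]
        rw [div_le_iff₀ hlogc] at hL2
        linarith
      calc Real.exp (3 * R ^ 2 / (L : ℝ)) ≤ Real.exp (Real.log c) := Real.exp_le_exp.2 hlc
        _ = c := Real.exp_log (by linarith)
    calc w ^ L ≤ Real.exp t ^ L := step1
      _ = Real.exp ((L : ℝ) * t) := step2
      _ ≤ Real.exp (R + 3 * R ^ 2 / L) := step3
      _ ≤ Real.exp R * c := step4
  -- sum bound
  have hwLpos : 0 < w ^ L := by positivity
  have hsum1 : ∑ j ∈ Finset.Icc 1 L, w ^ (L - j) * (|γ j| + |ε j|)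
      ≤ w ^ L * ∑ j ∈ Finset.Icc 1 L, (|γ j| + |ε j|) := by
    rw [Finset.mul_sum]
    apply Finset.sum_le_sum
    intro j hj
    apply mul_le_mul_of_nonneg_right _ (by positivity)
    exact pow_le_pow_right₀ hw1 (Nat.sub_le L j)
  have hsum2 : ∑ j ∈ Finset.Icc 1 L, (|γ j| + |ε j|) ≤ L * S := by
    rw [Finset.sum_add_distrib, hSdef]
    have hg : ∑ j ∈ Finset.Icc 1 L, |γ j| ≤ L * δ₁ := by
      rw [one_div, inv_mul_le_iff₀ hLR] at hγ; linarith [hγ]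
    have he : ∑ j ∈ Finset.Icc 1 L, |ε j| ≤ L * δ₂ := by
      rw [one_div, inv_mul_le_iff₀ hLR] at hε; linarith [hε]
    linarith
  have hcoef : 0 ≤ (4 * R / L) / D := by positivity
  have hmain2 : |ΔL| ≤ δ₀ * w ^ L + (4 * R / L) / D * (w ^ L * (L * S)) := by
    refine le_trans hmain (add_le_add ?_ ?_)
    · exact mul_le_mul_of_nonneg_right hΔ0 hwLpos.le
    · exact mul_le_mul_of_nonneg_left
        (le_trans hsum1 (mul_le_mul_of_nonneg_left hsum2 hwLpos.le)) hcoef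
  have hsimp : (4 * R / L) / D * ((w : ℝ) ^ L * (L * S)) = w ^ L * (4 * R / D * S) := by
    have : (4 * R / L) / D * ((w : ℝ) ^ L * (L * S))
        = w ^ L * (4 * R / D * S) * ((L : ℝ)⁻¹ * L) := by ring
    rw [this, inv_mul_cancel₀ hLne, mul_one]
  rw [hsimp] at hmain2
  have h45 : 4 * R / D ≤ 4.5 * R := by
    rw [div_le_iff₀ hDpos]
    linarith only [mul_le_mul_of_nonneg_left hD89 (by positivity : (0:ℝ) ≤ 4.5 * R)]
  have hfinal : δ₀ * w ^ L + w ^ L * (4 * R / D * S) ≤ Real.exp R * c * (δ₀ + 4.5 * R * S) := by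
    have hstep : δ₀ * w ^ L + w ^ L * (4 * R / D * S) ≤ w ^ L * (δ₀ + 4.5 * R * S) := by
      linarith only [h0, hwLpos,
        mul_le_mul_of_nonneg_left (mul_le_mul_of_nonneg_right h45 hSpos.le) hwLpos.le]
    exact le_trans hstep (mul_le_mul_of_nonneg_right hpow hden.le)
  have hcc : Real.exp R * c * (δ₀ + 4.5 * R * S) = Real.exp R * (δ₀ + 5 * R * S) := by
    rw [hcdef]
    field_simp
  rw [hcc] at hfinal
  exact le_trans hmain2 hfinal
end

section
/- For all sufficiently large M, M · exp(√(2 log M)) · Φ(√(2 log M) − 1)^{M−1} → 0 as M → ∞; more precisely Φ(√(2 log M) − 1)^{M−1} ≤ exp( − exp(√(2 log M)) / (√(2 log M)·√(4πe)) ) for large M. -/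
/-!
The derivative of `-t / (1 + t²) · e^{-t²/2}` is `e^{-t²/2} (1 - 2 / (1 + t²)²) ≤ e^{-t²/2}`,
so integrating it over `(x, ∞)` gives the tail bound `1 - Φ(x) ≥ x / (1 + x²) · φ(x)`, and
`1 - y ≤ e^{-y}` turns this into `Φ(x) ≤ exp (-x / (1 + x²) · φ(x))`.
With `s = √(2 log M)` and `x = s - 1` we have `M = e^{s²/2}` and `φ(x) = e^s / (M √(2πe))`;
for `s ≥ 2` the factor `(M - 1) x / (M (1 + x²))` is at least `1 / (√2 s)`, which is the first
bound. Consequently `M e^s Φ(x)^{M-1} ≤ exp (s²/2 + s - e^s / (6 s))`, and `e^s ≥ s⁴/24` makes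
this at most `e^{-s}` for `s ≥ 144`.
-/

open Real MeasureTheory Filter

/-- Standard Gaussian CDF. -/
noncomputable def gaussCdf (z : ℝ) : ℝ :=
  ∫ t in Set.Iic z, Real.exp (-(t ^ 2) / 2) / Real.sqrt (2 * π)

lemma integrable_exp_neg_sq_div_two : Integrable fun t : ℝ => exp (-(t ^ 2) / 2) := by
  simpa [neg_div, div_eq_inv_mul] using integrable_exp_neg_mul_sq (b := 1 / 2) (by norm_num)

lemma integral_exp_neg_sq_div_two : ∫ t : ℝ, exp (-(t ^ 2) / 2) = √(2 * π) := by
  simpa [neg_div, div_eq_inv_mul, div_inv_eq_mul, mul_comm] using integral_gaussian (1 / 2)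

lemma tendsto_exp_neg_sq_div_two_atTop :
    Tendsto (fun t : ℝ => exp (-(t ^ 2) / 2)) atTop (nhds 0) :=
  tendsto_exp_atBot.comp <|
    (tendsto_neg_atTop_atBot.comp (tendsto_pow_atTop two_ne_zero)).atBot_div_const two_pos

lemma hasDerivAt_neg_div_one_add_sq_mul_exp (t : ℝ) :
    HasDerivAt (fun t => -(t / (1 + t ^ 2) * exp (-(t ^ 2) / 2)))
      (exp (-(t ^ 2) / 2) * (1 - 2 / (1 + t ^ 2) ^ 2)) t := by
  have hpos : (0 : ℝ) < 1 + t ^ 2 := by positivity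
  have hrat : HasDerivAt (fun t : ℝ => t / (1 + t ^ 2))
      ((1 * (1 + t ^ 2) - t * (2 * t)) / (1 + t ^ 2) ^ 2) t := by
    simpa [Pi.div_def] using (hasDerivAt_id' t).div ((hasDerivAt_pow 2 t).const_add 1) hpos.ne'
  have hexp : HasDerivAt (fun t : ℝ => exp (-(t ^ 2) / 2))
      (exp (-(t ^ 2) / 2) * (-(2 * t) / 2)) t := by
    simpa using ((hasDerivAt_pow 2 t).neg.div_const 2).exp
  refine (hrat.mul hexp).neg.congr_deriv ?_
  field_simp
  ring

lemma div_one_add_sq_mul_exp_le_integral_Ioi (x : ℝ) :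
    x / (1 + x ^ 2) * exp (-(x ^ 2) / 2) ≤ ∫ t in Set.Ioi x, exp (-(t ^ 2) / 2) := by
  set g : ℝ → ℝ := fun t => exp (-(t ^ 2) / 2) * (1 - 2 / (1 + t ^ 2) ^ 2)
  have hg_le : ∀ t, |g t| ≤ exp (-(t ^ 2) / 2) := fun t => by
    have h2 : 2 / (1 + t ^ 2) ^ 2 ≤ 2 := div_le_self two_pos.le (one_le_pow₀ (by nlinarith))
    have h0 : 0 ≤ 2 / (1 + t ^ 2) ^ 2 := by positivity
    rw [abs_mul, abs_of_pos (exp_pos _)]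
    exact mul_le_of_le_one_right (exp_pos _).le (abs_le.mpr ⟨by linarith, by linarith⟩)
  have hg_int : Integrable g :=
    integrable_exp_neg_sq_div_two.mono' (by fun_prop) (ae_of_all _ hg_le)
  have hf_tendsto : Tendsto (fun t => -(t / (1 + t ^ 2) * exp (-(t ^ 2) / 2))) atTop (nhds 0) := by
    refine squeeze_zero_norm (fun t => ?_) tendsto_exp_neg_sq_div_two_atTop
    rw [norm_neg, norm_mul, Real.norm_of_nonneg (exp_pos _).le, norm_div,
      Real.norm_of_nonneg (by positivity : (0 : ℝ) ≤ 1 + t ^ 2)]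
    refine mul_le_of_le_one_left (exp_pos _).le ((div_le_one (by positivity)).mpr ?_)
    rw [Real.norm_eq_abs]
    nlinarith [sq_abs t, sq_nonneg (|t| - 1)]
  have hFTC := integral_Ioi_of_hasDerivAt_of_tendsto' (a := x)
    (fun t _ => hasDerivAt_neg_div_one_add_sq_mul_exp t) hg_int.integrableOn hf_tendsto
  rw [zero_sub, neg_neg] at hFTC
  rw [← hFTC]
  exact setIntegral_mono hg_int.integrableOn integrable_exp_neg_sq_div_two.integrableOn
    fun t => (le_abs_self _).trans (hg_le t)

lemma gaussCdf_eq_one_sub (z : ℝ) :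
    gaussCdf z = 1 - (∫ t in Set.Ioi z, exp (-(t ^ 2) / 2)) / √(2 * π) := by
  have hsplit := intervalIntegral.integral_Iic_add_Ioi (b := z)
    integrable_exp_neg_sq_div_two.integrableOn integrable_exp_neg_sq_div_two.integrableOn
  rw [integral_exp_neg_sq_div_two] at hsplit
  have hpos : 0 < √(2 * π) := by positivity
  rw [gaussCdf, integral_div, eq_sub_iff_add_eq, ← add_div, hsplit, div_self hpos.ne']

lemma gaussCdf_nonneg (z : ℝ) : 0 ≤ gaussCdf z :=
  integral_nonneg fun t => by positivity

lemma gaussCdf_le_exp (x : ℝ) :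
    gaussCdf x ≤ exp (-(x / (1 + x ^ 2) * exp (-(x ^ 2) / 2) / √(2 * π))) := by
  rw [gaussCdf_eq_one_sub]
  refine le_trans ?_ (one_sub_le_exp_neg _)
  gcongr
  exact div_one_add_sq_mul_exp_le_integral_Ioi x

lemma exp_sqrt_two_mul_log_sq_div_two {y : ℝ} (hy : 1 ≤ y) : exp (√(2 * log y) ^ 2 / 2) = y := by
  rw [sq_sqrt (by linarith [log_nonneg hy]), mul_div_cancel_left₀ _ two_ne_zero,
    exp_log (by linarith)]

lemma sqrt_four_pi_mul_exp_one : √(4 * π * exp 1) = √2 * √(2 * π) * exp (1 / 2) := by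
  rw [show (4 : ℝ) * π * exp 1 = 2 * (2 * π) * exp 1 by ring, sqrt_mul (by positivity),
    sqrt_mul zero_le_two, exp_half]

lemma sqrt_four_pi_mul_exp_one_le_six : √(4 * π * exp 1) ≤ 6 := by
  rw [sqrt_le_left (by norm_num)]
  nlinarith [pi_lt_d2, exp_one_lt_d9, pi_pos, exp_pos 1]

lemma gaussCdf_sub_one_pow_le {s : ℝ} (hs : 2 ≤ s) {M : ℕ} (hM : exp (s ^ 2 / 2) = M) :
    gaussCdf (s - 1) ^ (M - 1) ≤ exp (-exp s / (s * √(4 * π * exp 1))) := by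
  have hM4 : (4 : ℝ) ≤ M := by
    rw [← hM]
    nlinarith [quadratic_le_exp_of_nonneg (x := s ^ 2 / 2) (by positivity)]
  have hM1 : 1 ≤ M := by exact_mod_cast (show (1 : ℝ) ≤ M by linarith)
  set a := (s - 1) / (1 + (s - 1) ^ 2) * exp (-((s - 1) ^ 2) / 2) / √(2 * π)
  have hpow : gaussCdf (s - 1) ^ (M - 1) ≤ exp (-((M - 1 : ℝ) * a)) := by
    calc gaussCdf (s - 1) ^ (M - 1) ≤ exp (-a) ^ (M - 1) :=
          pow_le_pow_left₀ (gaussCdf_nonneg _) (gaussCdf_le_exp _) _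
      _ = exp (-((M - 1 : ℝ) * a)) := by
          rw [← exp_nat_mul, Nat.cast_sub hM1, Nat.cast_one, mul_neg]
  have hexp_sq : exp (-((s - 1) ^ 2) / 2) = exp s / (exp (1 / 2) * M) := by
    rw [← hM, ← exp_add, ← exp_sub]
    ring_nf
  have hsqrt2 : 4 / 3 ≤ √2 := le_sqrt_of_sq_le (by norm_num)
  have hM_le : (M : ℝ) ≤ √2 * (M - 1) := by nlinarith
  have hs_le : 1 + (s - 1) ^ 2 ≤ s * (s - 1) := by nlinarith
  have key : (M : ℝ) * (1 + (s - 1) ^ 2) ≤ √2 * (M - 1) * (s * (s - 1)) :=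
    mul_le_mul hM_le hs_le (by positivity) (by linarith)
  set E := exp s / (√(2 * π) * exp (1 / 2))
  have hbound : exp s / (s * √(4 * π * exp 1)) ≤ (M - 1 : ℝ) * a :=
    calc exp s / (s * √(4 * π * exp 1)) = E * (1 / (√2 * s)) := by
          rw [sqrt_four_pi_mul_exp_one]; ring
      _ ≤ E * ((M - 1) * (s - 1) / (M * (1 + (s - 1) ^ 2))) := by
          refine mul_le_mul_of_nonneg_left ?_ (by positivity)
          rw [div_le_div_iff₀ (by positivity) (by positivity)]
          linarith
      _ = (M - 1 : ℝ) * a := by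
          simp only [a, E, hexp_sq]
          field_simp
  calc gaussCdf (s - 1) ^ (M - 1) ≤ exp (-((M - 1 : ℝ) * a)) := hpow
    _ ≤ exp (-exp s / (s * √(4 * π * exp 1))) := by
        rw [exp_le_exp, neg_div]
        exact neg_le_neg hbound

lemma sq_div_two_add_sub_exp_div_le_neg {s c : ℝ} (hs : 144 ≤ s) (hc : 0 < c) (hc6 : c ≤ 6) :
    s ^ 2 / 2 + s - exp s / (s * c) ≤ -s := by
  have hquartic : s ^ 4 / 24 ≤ exp s := by
    simpa [Nat.factorial] using pow_div_factorial_le_exp (x := s) (by linarith) 4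
  have hcube : s ^ 3 / 144 ≤ exp s / (s * c) :=
    calc s ^ 3 / 144 = s ^ 4 / 24 / (s * 6) := by field_simp; ring
      _ ≤ exp s / (s * c) := by gcongr
  nlinarith

lemma natCast_mul_exp_mul_gaussCdf_sub_one_pow_le {s : ℝ} (hs : 144 ≤ s) {M : ℕ}
    (hM : exp (s ^ 2 / 2) = M) : M * exp s * gaussCdf (s - 1) ^ (M - 1) ≤ exp (-s) :=
  calc M * exp s * gaussCdf (s - 1) ^ (M - 1)
      ≤ M * exp s * exp (-exp s / (s * √(4 * π * exp 1))) := by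
        gcongr
        exact gaussCdf_sub_one_pow_le (by linarith) hM
    _ = exp (s ^ 2 / 2 + s - exp s / (s * √(4 * π * exp 1))) := by
        rw [sub_eq_add_neg, ← neg_div, exp_add, exp_add, hM]
    _ ≤ exp (-s) :=
        exp_le_exp.mpr <| sq_div_two_add_sub_exp_div_le_neg hs (by positivity)
          sqrt_four_pi_mul_exp_one_le_six

theorem I2_vanishes :
    (∃ M₀ : ℕ, ∀ M : ℕ, M₀ ≤ M →
      gaussCdf (Real.sqrt (2 * Real.log M) - 1) ^ (M - 1) ≤
        Real.exp (- Real.exp (Real.sqrt (2 * Real.log M)) /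
          (Real.sqrt (2 * Real.log M) * Real.sqrt (4 * π * Real.exp 1)))) ∧
    Tendsto (fun M : ℕ =>
        (M : ℝ) * Real.exp (Real.sqrt (2 * Real.log M)) *
          gaussCdf (Real.sqrt (2 * Real.log M) - 1) ^ (M - 1))
      atTop (nhds 0) := by
  have hs : Tendsto (fun M : ℕ => √(2 * log M)) atTop atTop :=
    tendsto_sqrt_atTop.comp <|
      (tendsto_log_atTop.comp tendsto_natCast_atTop_atTop).const_mul_atTop two_pos
  have hM : ∀ᶠ M : ℕ in atTop, exp (√(2 * log M) ^ 2 / 2) = M :=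
    (eventually_ge_atTop 1).mono fun M hM =>
      exp_sqrt_two_mul_log_sq_div_two (by exact_mod_cast hM)
  refine ⟨eventually_atTop.mp ?_, ?_⟩
  · filter_upwards [hs.eventually_ge_atTop 2, hM] with M hs2 hM
    exact gaussCdf_sub_one_pow_le hs2 hM
  · refine squeeze_zero'
      (.of_forall fun M => mul_nonneg (by positivity) (pow_nonneg (gaussCdf_nonneg _) _)) ?_
      (tendsto_exp_atBot.comp (tendsto_neg_atTop_atBot.comp hs))
    filter_upwards [hs.eventually_ge_atTop 144, hM] with M hs144 hM
    exact natCast_mul_exp_mul_gaussCdf_sub_one_pow_le hs144 hM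
end
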